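/- The number of λυ-terms of size n with exactly k β-redexes, b(n,k), has bivariate generating function T(z,u) = Σ b(n,k) z^n u^k satisfying T(z,u) = z/(1-z) + z T(z,u) + z T(z,u) S(z,u) + z T(z,u)² + (u-1) z² T(z,u)², where S(z,u) = z T(z,u) + z S(z,u) + z. In particular, specializing u = 1 recovers the Catalan generating function: T(z,1) = C(z) - 1. -/

import Mathlib

/-
Symbolic method. A term is an index, an abstraction, an application or a closure, and a
substitution is a slash, a lift or a shift; size and redex count are additive over these
constructors, so the constructor bijections turn disjoint unions into sums and pairs into
products of generating functions, each constructor contributing a factor `z`. The only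
non-additive point is that `x b` is a redex exactly when `x` is an abstraction; since the
non-abstractions have generating function `T - zT`, the applications contribute
`u z²T² + z(T - zT)T`, which is the `(u - 1) z²T²` correction. At `u = 1`, eliminating
`S = z(T + 1)/(1 - z)` leaves `T(1 - 2z) = z + zT²`, which `C - 1` also satisfies, and this
quadratic has only one power-series root with zero constant term.
-/

open Finset Filter

mutual
inductive Tm : Type
  | idx : Nat → Tm
  | lam : Tm → Tm
  | app : Tm → Tm → Tm
  | clos : Tm → Subst → Tm
inductive Subst : Type
  | slash : Tm → Subst
  | lift : Subst → Subst
  | shift : Subst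
end

mutual
/-- Natural size of a λυ-term: every constructor weighs 1; index n has size n+1. -/
def Tm.size : Tm → Nat
  | .idx n => n + 1
  | .lam a => Tm.size a + 1
  | .app a b => Tm.size a + Tm.size b + 1
  | .clos a s => Tm.size a + Subst.size s + 1
/-- Natural size of an explicit substitution. -/
def Subst.size : Subst → Nat
  | .slash a => Tm.size a + 1
  | .lift s => Subst.size s + 1
  | .shift => 1
end

/-- Number of λυ-terms of size `n`. -/
noncomputable def tcount (n : ℕ) : ℕ := Nat.card {a : Tm // Tm.size a = n}

/-- Number of explicit substitutions of size `n`. -/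
noncomputable def scount (n : ℕ) : ℕ := Nat.card {s : Subst // Subst.size s = n}

mutual
/-- Number of (beta)-redexes occurring in a λυ-term. -/
def Tm.betaCount : Tm → ℕ
  | .idx _ => 0
  | .lam a => Tm.betaCount a
  | .app (.lam a) b => Tm.betaCount a + Tm.betaCount b + 1
  | .app a b => Tm.betaCount a + Tm.betaCount b
  | .clos a s => Tm.betaCount a + Subst.betaCount s
/-- Number of (beta)-redexes occurring in a substitution. -/
def Subst.betaCount : Subst → ℕ
  | .slash a => Tm.betaCount a
  | .lift s => Subst.betaCount s
  | .shift => 0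
end

open MvPowerSeries

/-- Number of λυ-terms of size n with exactly k β-redexes. -/
noncomputable def bcount (n k : ℕ) : ℕ :=
  Nat.card {a : Tm // Tm.size a = n ∧ Tm.betaCount a = k}

/-- Number of substitutions of size n with exactly k β-redexes. -/
noncomputable def bscount (n k : ℕ) : ℕ :=
  Nat.card {s : Subst // Subst.size s = n ∧ Subst.betaCount s = k}

/-- Bivariate generating function of λυ-terms by size (z) and number of β-redexes (u). -/
noncomputable def Tzu : MvPowerSeries (Fin 2) ℚ :=
  fun e => (bcount (e 0) (e 1) : ℚ)

/-- Bivariate generating function of substitutions by size and number of β-redexes. -/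
noncomputable def Szu : MvPowerSeries (Fin 2) ℚ :=
  fun e => (bscount (e 0) (e 1) : ℚ)

noncomputable def z : MvPowerSeries (Fin 2) ℚ := MvPowerSeries.X 0
noncomputable def u : MvPowerSeries (Fin 2) ℚ := MvPowerSeries.X 1

section WeightedGF

variable {σ α β γ : Type*}

def HasFiniteFibers (w : α → γ) : Prop := ∀ c, Finite {a // w a = c}

theorem HasFiniteFibers.comp_injective {w : α → γ} (hw : HasFiniteFibers w) {f : β → α}
    (hf : f.Injective) : HasFiniteFibers (w ∘ f) := fun c =>
  have := hw c
  Finite.of_injective (fun b : {b // w (f b) = c} => (⟨f b, b.2⟩ : {a // w a = c}))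
    fun _ _ h => Subtype.ext (hf (congrArg Subtype.val h))

theorem HasFiniteFibers.sumElim_left {w₁ : α → γ} {w₂ : β → γ}
    (hw : HasFiniteFibers (Sum.elim w₁ w₂)) : HasFiniteFibers w₁ :=
  hw.comp_injective Sum.inl_injective

theorem HasFiniteFibers.sumElim_right {w₁ : α → γ} {w₂ : β → γ}
    (hw : HasFiniteFibers (Sum.elim w₁ w₂)) : HasFiniteFibers w₂ :=
  hw.comp_injective Sum.inr_injective

theorem HasFiniteFibers.of_add_const [Add γ] {w : α → γ} {d : γ}
    (hw : HasFiniteFibers fun a => w a + d) : HasFiniteFibers w := fun c =>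
  have := hw (c + d)
  Finite.of_injective (fun a : {a // w a = c} => (⟨a.1, by rw [a.2]⟩ : {a // w a + d = c + d}))
    fun _ _ h => Subtype.ext (by simpa using h)

theorem HasFiniteFibers.of_injective {w : α → γ} (hw : w.Injective) : HasFiniteFibers w :=
  fun _ => @Finite.of_subsingleton _ ⟨fun a b => Subtype.ext (hw (a.2.trans b.2.symm))⟩

theorem HasFiniteFibers.of_le_apply {w : α → σ →₀ ℕ} {f : α → ℕ}
    (hf : ∀ n, {a | f a ≤ n}.Finite) {i : σ} (hi : ∀ a, f a ≤ w a i) : HasFiniteFibers w :=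
  fun e => ((hf (e i)).subset fun a (ha : w a = e) => (ha ▸ hi a : f a ≤ e i)).to_subtype

/-- `Nat.card` vanishes on infinite types, hence the `HasFiniteFibers` hypotheses below. -/
noncomputable def weightGF (w : α → σ →₀ ℕ) : MvPowerSeries σ ℚ :=
  fun e => Nat.card {a // w a = e}

theorem coeff_weightGF (w : α → σ →₀ ℕ) (e : σ →₀ ℕ) :
    coeff e (weightGF w) = Nat.card {a // w a = e} := rfl

theorem weightGF_comp_equiv (w : α → σ →₀ ℕ) (f : β ≃ α) : weightGF (w ∘ f) = weightGF w := by
  ext e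
  rw [coeff_weightGF, coeff_weightGF]
  exact congrArg _ (Nat.card_congr (f.subtypeEquiv fun _ => Iff.rfl))

theorem weightGF_const [Unique α] (d : σ →₀ ℕ) : weightGF (fun _ : α => d) = monomial d 1 := by
  classical
  ext e
  rw [coeff_weightGF, coeff_monomial]
  split_ifs with h
  · simp [h]
  · have : IsEmpty {_a : α // d = e} := ⟨fun a => h a.2.symm⟩
    simp

theorem weightGF_sumElim {w₁ : α → σ →₀ ℕ} {w₂ : β → σ →₀ ℕ}
    (hw : HasFiniteFibers (Sum.elim w₁ w₂)) :
    weightGF (Sum.elim w₁ w₂) = weightGF w₁ + weightGF w₂ := by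
  ext e
  have := hw.sumElim_left e
  have := hw.sumElim_right e
  simp only [map_add, coeff_weightGF, Nat.card_congr Equiv.subtypeSum, Nat.card_sum,
    Sum.elim_inl, Sum.elim_inr, Nat.cast_add]

theorem weightGF_add_const (w : α → σ →₀ ℕ) (d : σ →₀ ℕ) :
    weightGF (fun a => w a + d) = monomial d 1 * weightGF w := by
  ext e
  rw [coeff_monomial_mul, coeff_weightGF, coeff_weightGF]
  split_ifs with hd
  · rw [one_mul]
    exact congrArg _ (Nat.card_congr (Equiv.subtypeEquivRight fun a =>
      ⟨fun h => by rw [← h, add_tsub_cancel_right], fun h => by rw [h, tsub_add_cancel_of_le hd]⟩))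
  · have : IsEmpty {a // w a + d = e} := ⟨fun a => hd (a.2 ▸ le_add_self)⟩
    simp

def prodFiberEquiv [AddMonoid γ] [HasAntidiagonal γ] (w₁ : α → γ) (w₂ : β → γ) (c : γ) :
    {p : α × β // w₁ p.1 + w₂ p.2 = c} ≃
      Σ q : antidiagonal c, {a // w₁ a = q.1.1} × {b // w₂ b = q.1.2} where
  toFun p := ⟨⟨(w₁ p.1.1, w₂ p.1.2), mem_antidiagonal.2 p.2⟩, ⟨p.1.1, rfl⟩, ⟨p.1.2, rfl⟩⟩
  invFun x := ⟨(x.2.1.1, x.2.2.1), by rw [x.2.1.2, x.2.2.2]; exact mem_antidiagonal.1 x.1.2⟩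
  left_inv _ := rfl
  right_inv := by
    rintro ⟨⟨⟨c₁, c₂⟩, hc⟩, ⟨a, ha⟩, ⟨b, hb⟩⟩
    dsimp only at ha hb
    subst ha hb
    rfl

theorem weightGF_prod {w₁ : α → σ →₀ ℕ} {w₂ : β → σ →₀ ℕ}
    (hw : HasFiniteFibers fun p : α × β => w₁ p.1 + w₂ p.2) :
    weightGF (fun p : α × β => w₁ p.1 + w₂ p.2) = weightGF w₁ * weightGF w₂ := by
  classical
  ext e
  have := hw e
  have : ∀ q : antidiagonal e, Finite ({a // w₁ a = q.1.1} × {b // w₂ b = q.1.2}) :=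
    fun q => Finite.of_injective (fun x => (prodFiberEquiv w₁ w₂ e).symm ⟨q, x⟩)
      fun x y h => by simpa using h
  rw [coeff_weightGF, Nat.card_congr (prodFiberEquiv w₁ w₂ e), Nat.card_sigma, coeff_mul]
  push_cast [Nat.card_prod]
  exact Finset.sum_coe_sort (antidiagonal e) fun q =>
    (Nat.card {a // w₁ a = q.1} : ℚ) * Nat.card {b // w₂ b = q.2}

theorem constantCoeff_one_sub_monomial {R : Type*} [CommRing R] {d : σ →₀ ℕ} (hd : d ≠ 0)
    (a : R) : constantCoeff (1 - monomial d a) = 1 := by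
  rw [← coeff_zero_eq_constantCoeff_apply, map_sub, coeff_monomial_ne (Ne.symm hd), sub_zero,
    coeff_zero_one]

theorem weightGF_succ_nsmul {d : σ →₀ ℕ} (hd : d ≠ 0) :
    weightGF (fun n : ℕ => (n + 1) • d) = monomial d 1 * (1 - monomial d 1)⁻¹ := by
  obtain ⟨i, hi⟩ : ∃ i, d i ≠ 0 := by simpa [Finsupp.ext_iff] using hd
  have hinj : (fun n : ℕ => (n + 1) • d).Injective := fun m n h => by
    simpa [hi] using congrArg (· i) h
  have hdec : (fun n : ℕ => (n + 1) • d) ∘ Equiv.natSumPUnitEquivNat.{0} =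
      Sum.elim (fun n => (n + 1) • d + d) fun _ : Unit => d := by
    funext x
    rcases x with n | _
    · exact succ_nsmul d (n + 1)
    · exact one_nsmul d
  have hfin : HasFiniteFibers (Sum.elim (fun n : ℕ => (n + 1) • d + d) fun _ : Unit => d) :=
    hdec ▸ (HasFiniteFibers.of_injective hinj).comp_injective
      Equiv.natSumPUnitEquivNat.{0}.injective
  have hrec : weightGF (fun n : ℕ => (n + 1) • d) =
      monomial d 1 * weightGF (fun n : ℕ => (n + 1) • d) + monomial d 1 := by
    conv_lhs => rw [← weightGF_comp_equiv _ Equiv.natSumPUnitEquivNat.{0}, hdec,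
      weightGF_sumElim hfin, weightGF_add_const, weightGF_const]
  rw [MvPowerSeries.eq_mul_inv_iff_mul_eq
    (by rw [constantCoeff_one_sub_monomial hd]; exact one_ne_zero)]
  linear_combination hrec

end WeightedGF

theorem Nat.card_subtype_eq_sum_range {α : Type*} (p : α → Prop) [Finite {a // p a}]
    (f : α → ℕ) (n : ℕ) (hf : ∀ a, p a → f a ≤ n) :
    Nat.card {a // p a} = ∑ k ∈ Finset.range (n + 1), Nat.card {a // p a ∧ f a = k} := by
  let g : {a // p a} → Fin (n + 1) := fun a => ⟨f a, Nat.lt_succ_of_le (hf a a.2)⟩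
  rw [← Nat.card_congr (Equiv.sigmaFiberEquiv g), Nat.card_sigma, ← Fin.sum_univ_eq_sum_range]
  refine Finset.sum_congr rfl fun k _ => Nat.card_congr ?_
  exact (Equiv.subtypeEquivRight fun a => Fin.ext_iff).trans
    (Equiv.subtypeSubtypeEquivSubtypeInter p (f · = k))

theorem Tm.size_pos (a : Tm) : 0 < a.size := by
  cases a <;> simp [Tm.size]

theorem Subst.size_pos (s : Subst) : 0 < s.size := by
  cases s <;> simp [Subst.size]

theorem finite_setOf_size_le (n : ℕ) :
    {a : Tm | a.size ≤ n}.Finite ∧ {s : Subst | s.size ≤ n}.Finite := by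
  induction n with
  | zero =>
    constructor
    · convert Set.finite_empty
      exact Set.eq_empty_of_forall_notMem fun a h => (Tm.size_pos a).ne' (Nat.le_zero.1 h)
    · convert Set.finite_empty
      exact Set.eq_empty_of_forall_notMem fun s h => (Subst.size_pos s).ne' (Nat.le_zero.1 h)
  | succ n ih =>
    obtain ⟨hT, hS⟩ := ih
    constructor
    · refine ((((Set.finite_Iic n).image Tm.idx).union (hT.image Tm.lam)).union
        ((hT.image2 Tm.app hT).union (hT.image2 Tm.clos hS))).subset ?_
      rintro (m | a | ⟨a, b⟩ | ⟨a, s⟩) h <;> simp only [Set.mem_ofPred_eq, Tm.size] at h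
      · exact .inl (.inl ⟨m, Set.mem_Iic.2 (by omega), rfl⟩)
      · exact .inl (.inr ⟨a, Set.mem_ofPred.2 (by omega), rfl⟩)
      · have := Tm.size_pos a; have := Tm.size_pos b
        exact .inr (.inl ⟨a, Set.mem_ofPred.2 (by omega), b, Set.mem_ofPred.2 (by omega), rfl⟩)
      · have := Tm.size_pos a; have := Subst.size_pos s
        exact .inr (.inr ⟨a, Set.mem_ofPred.2 (by omega), s, Set.mem_ofPred.2 (by omega), rfl⟩)
    · refine ((hT.image Subst.slash).union ((hS.image Subst.lift).union
        (Set.finite_singleton Subst.shift))).subset ?_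
      rintro (a | s | _) h <;> simp only [Set.mem_ofPred_eq, Subst.size] at h
      · exact .inl ⟨a, Set.mem_ofPred.2 (by omega), rfl⟩
      · exact .inr (.inl ⟨s, Set.mem_ofPred.2 (by omega), rfl⟩)
      · exact .inr (.inr rfl)

mutual
theorem Tm.betaCount_le_size : (a : Tm) → a.betaCount ≤ a.size
  | .idx _ => by simp [Tm.betaCount]
  | .lam a => by simpa [Tm.betaCount, Tm.size] using a.betaCount_le_size.trans (Nat.le_succ _)
  | .app a b => by
    have := a.betaCount_le_size
    have := b.betaCount_le_size
    have : (Tm.app a b).betaCount ≤ a.betaCount + b.betaCount + 1 := by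
      cases a <;> simp [Tm.betaCount]
    simp only [Tm.size]
    omega
  | .clos a s => by
    have := a.betaCount_le_size
    have := s.betaCount_le_size
    simp only [Tm.betaCount, Tm.size]
    omega
theorem Subst.betaCount_le_size : (s : Subst) → s.betaCount ≤ s.size
  | .slash a => by
    simpa [Subst.betaCount, Subst.size] using a.betaCount_le_size.trans (Nat.le_succ _)
  | .lift s => by
    simpa [Subst.betaCount, Subst.size] using s.betaCount_le_size.trans (Nat.le_succ _)
  | .shift => by simp [Subst.betaCount]
end

def Tm.constructorEquiv : ℕ ⊕ Tm ⊕ Tm × Tm ⊕ Tm × Subst ≃ Tm where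
  toFun := Sum.elim Tm.idx
    (Sum.elim Tm.lam (Sum.elim (fun p => .app p.1 p.2) fun p => .clos p.1 p.2))
  invFun
    | .idx n => .inl n
    | .lam a => .inr (.inl a)
    | .app a b => .inr (.inr (.inl (a, b)))
    | .clos a s => .inr (.inr (.inr (a, s)))
  left_inv := by rintro (n | a | ⟨a, b⟩ | ⟨a, s⟩) <;> rfl
  right_inv a := by cases a <;> rfl

def Subst.constructorEquiv : Tm ⊕ Subst ⊕ Unit ≃ Subst where
  toFun := Sum.elim Subst.slash (Sum.elim Subst.lift fun _ => .shift)
  invFun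
    | .slash a => .inl a
    | .lift s => .inr (.inl s)
    | .shift => .inr (.inr ())
  left_inv := by rintro (a | s | _) <;> rfl
  right_inv s := by cases s <;> rfl

def Tm.lamSumEquiv : Tm ⊕ {x : Tm // ∀ a, x ≠ .lam a} ≃ Tm where
  toFun := Sum.elim Tm.lam Subtype.val
  invFun
    | .lam a => .inl a
    | .idx n => .inr ⟨.idx n, fun _ => nofun⟩
    | .app a b => .inr ⟨.app a b, fun _ => nofun⟩
    | .clos a s => .inr ⟨.clos a s, fun _ => nofun⟩
  left_inv := by
    rintro (a | ⟨x, hx⟩)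
    · rfl
    · cases x
      case lam a => exact absurd rfl (hx a)
      all_goals rfl
  right_inv a := by cases a <;> rfl

section Weight

variable {σ : Type*} (cz cu : σ →₀ ℕ)

/-- Size is marked by `x ^ cz` and each β-redex by `x ^ cu`: the two variables `z`, `u` give
`Tzu`, while `cu = 0` forgets the redexes. -/
noncomputable def Tm.weight (a : Tm) : σ →₀ ℕ := a.size • cz + a.betaCount • cu

noncomputable def Subst.weight (s : Subst) : σ →₀ ℕ := s.size • cz + s.betaCount • cu

theorem Tm.weight_idx (n : ℕ) : (Tm.idx n).weight cz cu = (n + 1) • cz := by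
  simp [Tm.weight, Tm.size, Tm.betaCount]

theorem Tm.weight_lam (a : Tm) : (Tm.lam a).weight cz cu = a.weight cz cu + cz := by
  simp only [Tm.weight, Tm.size, Tm.betaCount, add_smul, one_smul]
  abel

theorem Tm.weight_app_lam (a b : Tm) :
    (Tm.app (.lam a) b).weight cz cu = a.weight cz cu + b.weight cz cu + (2 • cz + cu) := by
  simp only [Tm.weight, Tm.size, Tm.betaCount, add_smul, one_smul]
  abel

theorem Tm.weight_app_of_ne_lam {x : Tm} (hx : ∀ a, x ≠ .lam a) (b : Tm) :
    (Tm.app x b).weight cz cu = x.weight cz cu + b.weight cz cu + cz := by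
  cases x
  case lam a => exact absurd rfl (hx a)
  all_goals simp only [Tm.weight, Tm.size, Tm.betaCount, add_smul, one_smul]; abel

theorem Tm.weight_clos (a : Tm) (s : Subst) :
    (Tm.clos a s).weight cz cu = a.weight cz cu + s.weight cz cu + cz := by
  simp only [Tm.weight, Subst.weight, Tm.size, Tm.betaCount, add_smul, one_smul]
  abel

theorem Subst.weight_slash (a : Tm) : (Subst.slash a).weight cz cu = a.weight cz cu + cz := by
  simp only [Tm.weight, Subst.weight, Subst.size, Subst.betaCount, add_smul, one_smul]
  abel

theorem Subst.weight_lift (s : Subst) : (Subst.lift s).weight cz cu = s.weight cz cu + cz := by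
  simp only [Subst.weight, Subst.size, Subst.betaCount, add_smul, one_smul]
  abel

theorem Subst.weight_shift : Subst.shift.weight cz cu = cz := by
  simp [Subst.weight, Subst.size, Subst.betaCount]

variable {cz}

theorem le_nsmul_add_nsmul_apply {i : σ} (hi : cz i ≠ 0) (n m : ℕ) :
    n ≤ (n • cz + m • cu) i := by
  simp only [Finsupp.add_apply, Finsupp.smul_apply, smul_eq_mul]
  nlinarith [Nat.one_le_iff_ne_zero.2 hi]

theorem Tm.hasFiniteFibers_weight (hcz : cz ≠ 0) : HasFiniteFibers (Tm.weight cz cu) := by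
  obtain ⟨i, hi⟩ : ∃ i, cz i ≠ 0 := by simpa [Finsupp.ext_iff] using hcz
  exact .of_le_apply (fun n => (finite_setOf_size_le n).1) fun a =>
    le_nsmul_add_nsmul_apply cu hi a.size a.betaCount

theorem Subst.hasFiniteFibers_weight (hcz : cz ≠ 0) : HasFiniteFibers (Subst.weight cz cu) := by
  obtain ⟨i, hi⟩ : ∃ i, cz i ≠ 0 := by simpa [Finsupp.ext_iff] using hcz
  exact .of_le_apply (fun n => (finite_setOf_size_le n).2) fun s =>
    le_nsmul_add_nsmul_apply cu hi s.size s.betaCount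

theorem Subst.weightGF_weight_eq (hcz : cz ≠ 0) :
    weightGF (Subst.weight cz cu) = monomial cz 1 * weightGF (Tm.weight cz cu)
      + monomial cz 1 * weightGF (Subst.weight cz cu) + monomial cz 1 := by
  have hdec : Subst.weight cz cu ∘ Subst.constructorEquiv = Sum.elim (fun a => a.weight cz cu + cz)
      (Sum.elim (fun s => s.weight cz cu + cz) fun _ => cz) := by
    funext x
    rcases x with a | s | _
    exacts [Subst.weight_slash cz cu a, Subst.weight_lift cz cu s, Subst.weight_shift cz cu]
  have hfin := hdec ▸ (Subst.hasFiniteFibers_weight cu hcz).comp_injective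
    Subst.constructorEquiv.injective
  conv_lhs => rw [← weightGF_comp_equiv _ Subst.constructorEquiv, hdec, weightGF_sumElim hfin,
    weightGF_sumElim hfin.sumElim_right, weightGF_add_const, weightGF_add_const, weightGF_const]
  rw [add_assoc]

theorem Tm.weightGF_ne_lam (hcz : cz ≠ 0) :
    weightGF (fun x : {x : Tm // ∀ a, x ≠ .lam a} => x.1.weight cz cu) =
      weightGF (Tm.weight cz cu) - monomial cz 1 * weightGF (Tm.weight cz cu) := by
  have hdec : Tm.weight cz cu ∘ Tm.lamSumEquiv =
      Sum.elim (fun a => a.weight cz cu + cz) fun x => x.1.weight cz cu := by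
    funext x
    rcases x with a | x
    exacts [Tm.weight_lam cz cu a, rfl]
  have hfin := hdec ▸ (Tm.hasFiniteFibers_weight cu hcz).comp_injective Tm.lamSumEquiv.injective
  rw [eq_sub_iff_add_eq']
  conv_rhs => rw [← weightGF_comp_equiv _ Tm.lamSumEquiv, hdec, weightGF_sumElim hfin,
    weightGF_add_const]

/-- Split by the head of the application: it is a β-redex exactly when the head is an
abstraction. -/
theorem Tm.weightGF_app (hcz : cz ≠ 0) :
    weightGF (fun p : Tm × Tm => (Tm.app p.1 p.2).weight cz cu) =
      monomial (2 • cz + cu) 1 * (weightGF (Tm.weight cz cu) * weightGF (Tm.weight cz cu)) +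
        monomial cz 1 * ((weightGF (Tm.weight cz cu) - monomial cz 1 * weightGF (Tm.weight cz cu))
          * weightGF (Tm.weight cz cu)) := by
  let e := (Equiv.sumProdDistrib Tm {x : Tm // ∀ a, x ≠ .lam a} Tm).symm.trans
    (Equiv.prodCongr Tm.lamSumEquiv (Equiv.refl Tm))
  have hdec : (fun p : Tm × Tm => (Tm.app p.1 p.2).weight cz cu) ∘ e =
      Sum.elim (fun p => (p.1.weight cz cu + p.2.weight cz cu) + (2 • cz + cu))
        fun p => ((fun x : {x : Tm // ∀ a, x ≠ .lam a} => x.1.weight cz cu) p.1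
          + p.2.weight cz cu) + cz := by
    funext p
    rcases p with ⟨a, b⟩ | ⟨⟨x, hx⟩, b⟩
    exacts [Tm.weight_app_lam cz cu a b, Tm.weight_app_of_ne_lam cz cu hx b]
  have happ : (fun p : Tm × Tm => Tm.app p.1 p.2).Injective := fun _ _ h =>
    Prod.ext (Tm.app.inj h).1 (Tm.app.inj h).2
  have hfin := hdec ▸ ((Tm.hasFiniteFibers_weight cu hcz).comp_injective happ).comp_injective
    e.injective
  rw [← weightGF_comp_equiv _ e, hdec, weightGF_sumElim hfin, weightGF_add_const,
    weightGF_add_const, weightGF_prod hfin.sumElim_left.of_add_const,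
    weightGF_prod (w₁ := fun x : {x : Tm // ∀ a, x ≠ .lam a} => x.1.weight cz cu)
      hfin.sumElim_right.of_add_const, Tm.weightGF_ne_lam cu hcz]

theorem Tm.weightGF_weight_eq (hcz : cz ≠ 0) :
    weightGF (Tm.weight cz cu) = monomial cz 1 * (1 - monomial cz 1)⁻¹
      + monomial cz 1 * weightGF (Tm.weight cz cu)
      + monomial cz 1 * weightGF (Tm.weight cz cu) * weightGF (Subst.weight cz cu)
      + monomial cz 1 * weightGF (Tm.weight cz cu) ^ 2
      + (monomial cu 1 - 1) * monomial cz 1 ^ 2 * weightGF (Tm.weight cz cu) ^ 2 := by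
  have hdec : Tm.weight cz cu ∘ Tm.constructorEquiv =
      Sum.elim (fun n => (n + 1) • cz) (Sum.elim (fun a => a.weight cz cu + cz)
        (Sum.elim (fun p : Tm × Tm => (Tm.app p.1 p.2).weight cz cu)
          fun p => (p.1.weight cz cu + p.2.weight cz cu) + cz)) := by
    funext x
    rcases x with n | a | ⟨a, b⟩ | ⟨a, s⟩
    exacts [Tm.weight_idx cz cu n, Tm.weight_lam cz cu a, rfl, Tm.weight_clos cz cu a s]
  have hfin := hdec ▸ (Tm.hasFiniteFibers_weight cu hcz).comp_injective
    Tm.constructorEquiv.injective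
  have hsum := weightGF_comp_equiv (Tm.weight cz cu) Tm.constructorEquiv
  rw [hdec, weightGF_sumElim hfin, weightGF_sumElim hfin.sumElim_right,
    weightGF_sumElim hfin.sumElim_right.sumElim_right, weightGF_succ_nsmul hcz,
    Tm.weightGF_app cu hcz, weightGF_add_const, weightGF_add_const,
    weightGF_prod hfin.sumElim_right.sumElim_right.sumElim_right.of_add_const] at hsum
  have hmono : monomial (2 • cz + cu) (1 : ℚ) = monomial cu 1 * monomial cz 1 ^ 2 := by
    rw [monomial_pow, monomial_mul_monomial, add_comm, one_pow, one_mul]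
  rw [hmono] at hsum
  linear_combination -hsum

end Weight

theorem Tm.weightGF_size_mul_one_sub_two_X :
    (weightGF (Tm.weight (Finsupp.single () 1) 0) : PowerSeries ℚ) * (1 - 2 * PowerSeries.X) =
      PowerSeries.X + PowerSeries.X * weightGF (Tm.weight (Finsupp.single () 1) 0) ^ 2 := by
  have hcz : Finsupp.single () 1 ≠ 0 := Finsupp.single_ne_zero.2 one_ne_zero
  have hT := Tm.weightGF_weight_eq 0 hcz
  have hS := Subst.weightGF_weight_eq 0 hcz
  have hinv := MvPowerSeries.mul_inv_cancel (1 - monomial (Finsupp.single () 1) (1 : ℚ))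
    (by rw [constantCoeff_one_sub_monomial hcz]; exact one_ne_zero)
  rw [monomial_zero_one, sub_self, zero_mul, zero_mul, add_zero] at hT
  rw [PowerSeries.X, X_def]
  -- eliminate `S` and `(1 - X)⁻¹`
  linear_combination (1 - monomial (Finsupp.single () 1) 1) * hT
    + monomial (Finsupp.single () 1) 1 * weightGF (Tm.weight (Finsupp.single () 1) 0) * hS
    + monomial (Finsupp.single () 1) 1 * hinv

theorem PowerSeries.eq_mk_catalan_sub_one {T : PowerSeries ℚ}
    (hT : T * (1 - 2 * X) = X + X * T ^ 2) : T = mk (fun n => (catalan n : ℚ)) - 1 := by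
  set C : PowerSeries ℚ := mk fun n => (catalan n : ℚ)
  have hmap : PowerSeries.map (Nat.castRingHom ℚ) catalanSeries = C := by
    ext n
    simp [C]
  have hC : C ^ 2 * X + 1 = C := by
    simpa [hmap] using
      congrArg (PowerSeries.map (Nat.castRingHom ℚ)) catalanSeries_sq_mul_X_add_one
  have hfactor : (T - (C - 1)) * (1 - 2 * X - X * (T + (C - 1))) = 0 := by
    linear_combination hT + hC
  have hunit : (1 - 2 * X - X * (T + (C - 1)) : PowerSeries ℚ) ≠ 0 := fun h => by
    simpa using congrArg PowerSeries.constantCoeff h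
  exact sub_eq_zero.1 ((mul_eq_zero.1 hfactor).resolve_right hunit)

theorem nsmul_single_add_nsmul_single_eq_iff (n k : ℕ) (e : Fin 2 →₀ ℕ) :
    n • Finsupp.single 0 1 + k • Finsupp.single 1 1 = e ↔ n = e 0 ∧ k = e 1 := by
  simp [Finsupp.ext_iff, Fin.forall_fin_two, eq_comm]

theorem Tzu_eq_weightGF :
    Tzu = weightGF (Tm.weight (Finsupp.single 0 1) (Finsupp.single 1 1)) := by
  ext e
  rw [coeff_weightGF, coeff_apply]
  exact congrArg Nat.cast (Nat.card_congr (Equiv.subtypeEquivRight fun a =>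
    (nsmul_single_add_nsmul_single_eq_iff a.size a.betaCount e).symm))

theorem Szu_eq_weightGF :
    Szu = weightGF (Subst.weight (Finsupp.single 0 1) (Finsupp.single 1 1)) := by
  ext e
  rw [coeff_weightGF, coeff_apply]
  exact congrArg Nat.cast (Nat.card_congr (Equiv.subtypeEquivRight fun s =>
    (nsmul_single_add_nsmul_single_eq_iff s.size s.betaCount e).symm))

theorem mk_sum_bcount_eq_weightGF :
    PowerSeries.mk (fun n => ∑ k ∈ Finset.range (n + 1), (bcount n k : ℚ)) =
      weightGF (Tm.weight (Finsupp.single () 1) 0) := by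
  ext n
  have : Finite {a : Tm // a.size = n} :=
    ((finite_setOf_size_le n).1.subset fun a (h : a.size = n) => h.le).to_subtype
  have hweight (a : Tm) :
      Tm.weight (Finsupp.single () 1) 0 a = Finsupp.single () n ↔ a.size = n := by
    simp [Tm.weight]
  rw [PowerSeries.coeff_mk, ← PowerSeries.coeff_coeToMvPowerSeries, coeff_weightGF,
    Nat.card_congr (Equiv.subtypeEquivRight hweight),
    Nat.card_subtype_eq_sum_range (fun a : Tm => a.size = n) Tm.betaCount n
      fun a h => h ▸ a.betaCount_le_size]
  push_cast
  rfl

/-- the bivariate generating-function system for β-redexes, and the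
specialization u = 1 recovering T(z,1) = C(z) - 1. -/
theorem stmt13 :
    Tzu = z * (1 - z)⁻¹ + z * Tzu + z * Tzu * Szu + z * Tzu ^ 2
        + (u - 1) * z ^ 2 * Tzu ^ 2 ∧
    Szu = z * Tzu + z * Szu + z ∧
    PowerSeries.mk (fun n => (∑ k ∈ Finset.range (n + 1), (bcount n k : ℚ)))
      = PowerSeries.mk (fun n => (catalan n : ℚ)) - 1 := by
  have hcz : Finsupp.single (0 : Fin 2) 1 ≠ 0 := Finsupp.single_ne_zero.2 one_ne_zero
  refine ⟨?_, ?_, ?_⟩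
  · rw [Tzu_eq_weightGF, Szu_eq_weightGF]
    exact Tm.weightGF_weight_eq _ hcz
  · rw [Tzu_eq_weightGF, Szu_eq_weightGF]
    exact Subst.weightGF_weight_eq _ hcz
  · rw [mk_sum_bcount_eq_weightGF]
    exact PowerSeries.eq_mk_catalan_sub_one Tm.weightGF_size_mul_one_sub_two_X
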